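/- If a collection of matrices {A_q}_{q∈Q} is l1-stable (i.e. for every x, Σ_{v∈Q*} ||A_v x||_2 converges), then it is asymptotically stable: for any sequence of words s_i ∈ Q* with |s_i| → ∞, A_{s_i} x → 0 for every x. -/

import Mathlib

open Matrix Filter Topology

/-- For a word `v = v₁⋯v_k` over `Q`, `wordProd A v = A_{v_k} ⋯ A_{v_1}` (with `A_ε = 1`). -/
def wordProd {Q : Type*} {n : ℕ} (A : Q → Matrix (Fin n) (Fin n) ℝ) (v : List Q) :
    Matrix (Fin n) (Fin n) ℝ :=
  v.foldl (fun M q => A q * M) 1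

/-- Euclidean norm of a vector in `ℝ^n`. -/
noncomputable def eucNorm {n : ℕ} (x : Fin n → ℝ) : ℝ :=
  Real.sqrt (∑ i, (x i) ^ 2)

theorem Filter.Tendsto.cofinite_of_comp_atTop {α β : Type*} {l : Filter α} {s : α → β}
    (g : β → ℕ) (h : Tendsto (g ∘ s) l atTop) : Tendsto s l cofinite := by
  refine (tendsto_comap_iff.mpr h).mono_right ?_
  rw [← Nat.cofinite_eq_atTop]
  exact comap_cofinite_le g

lemma eucNorm_eq_norm_toLp {n : ℕ} (y : Fin n → ℝ) :
    eucNorm y = ‖(WithLp.toLp 2 y : EuclideanSpace ℝ (Fin n))‖ := by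
  simp [eucNorm, EuclideanSpace.norm_eq]

lemma tendsto_zero_of_eucNorm_tendsto_zero {α : Type*} {l : Filter α} {n : ℕ}
    {f : α → Fin n → ℝ} (h : Tendsto (fun i => eucNorm (f i)) l (𝓝 0)) :
    Tendsto f l (𝓝 0) := by
  simp only [eucNorm_eq_norm_toLp, ← tendsto_zero_iff_norm_tendsto_zero] at h
  exact ((PiLp.continuous_ofLp 2 _).tendsto 0).comp h

theorem stmt1_general {Q : Type*} {n : ℕ} (A : Q → Matrix (Fin n) (Fin n) ℝ)
    (hstab : ∀ x : Fin n → ℝ, Summable (fun v : List Q => eucNorm ((wordProd A v).mulVec x)))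
    (s : ℕ → List Q) (hs : Tendsto (fun i => (s i).length) atTop atTop) (x : Fin n → ℝ) :
    Tendsto (fun i => (wordProd A (s i)).mulVec x) atTop (𝓝 0) := by
  have hlen : Tendsto s atTop cofinite := hs.cofinite_of_comp_atTop List.length
  exact tendsto_zero_of_eucNorm_tendsto_zero ((hstab x).tendsto_cofinite_zero.comp hlen)

/-- l1-stability implies asymptotic stability: if for every `x` the family
`(‖A_v x‖₂)_{v ∈ Q*}` is summable, then for any sequence of words `s_i` with
`|s_i| → ∞` one has `A_{s_i} x → 0` for every `x`. -/
theorem stmt1 {Q : Type*} [Fintype Q] {n : ℕ} (A : Q → Matrix (Fin n) (Fin n) ℝ)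
    (hstab : ∀ x : Fin n → ℝ, Summable (fun v : List Q => eucNorm ((wordProd A v).mulVec x)))
    (s : ℕ → List Q) (hs : Tendsto (fun i => (s i).length) atTop atTop) (x : Fin n → ℝ) :
    Tendsto (fun i => (wordProd A (s i)).mulVec x) atTop (𝓝 0) :=
  stmt1_general A hstab s hs x
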